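/- A permutation avoids the barred pattern 1\bar{4}23 if and only if it avoids the vincular pattern [12]3; that is, Av(1\bar{4}23) = Av([12]3). -/

import Mathlib

/-- The type of permutations of arbitrary (finite) length: a permutation of
length `n`, written in one-line notation as `w 0, w 1, …, w (n-1)` (using
0-indexed positions and values), is a bijection of `Fin n`. -/
def Permutation : Type := Σ n : ℕ, Equiv.Perm (Fin n)

/-- `f` is an occurrence of the classical pattern `p` in `w`: `f` selects
positions, in increasing order, whose values in `w` are order-isomorphic
to `p`. -/
def IsOcc {k n : ℕ} (p : Equiv.Perm (Fin k)) (w : Equiv.Perm (Fin n))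
    (f : Fin k → Fin n) : Prop :=
  StrictMono f ∧ ∀ i j : Fin k, p i < p j ↔ w (f i) < w (f j)

/-- The permutation `w` contains the classical pattern `p`. -/
def ContainsC {k n : ℕ} (p : Equiv.Perm (Fin k)) (w : Equiv.Perm (Fin n)) : Prop :=
  ∃ f : Fin k → Fin n, IsOcc p w f

/-- The set of permutations avoiding the classical pattern `p`. -/
def AvC {k : ℕ} (p : Equiv.Perm (Fin k)) : Set Permutation :=
  {w : Permutation | ¬ ContainsC p w.2}

/-- A barred pattern: a permutation together with a (nonempty) set of barred
positions. -/
structure BarredPattern where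
  len : ℕ
  perm : Equiv.Perm (Fin len)
  barred : Finset (Fin len)
  barred_nonempty : barred.Nonempty

/-- A barred pattern is proper if the barred positions form a proper subset
of all positions. -/
def BarredPattern.Proper (b : BarredPattern) : Prop := b.barred ≠ Finset.univ

/-- The underlying classical pattern of a barred pattern. -/
def BarredPattern.toPermutation (b : BarredPattern) : Permutation := ⟨b.len, b.perm⟩

/-- `w` contains the barred pattern `b`: there is an occurrence of the
unbarred portion of `b` in `w` (recorded by the values of `g` on the unbarred
positions) that cannot be completed to an occurrence of the underlying
classical pattern of `b` with the barred letters filled in, in their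
prescribed relative positions and values. -/
def BarredPattern.ContainedIn (b : BarredPattern) {n : ℕ}
    (w : Equiv.Perm (Fin n)) : Prop :=
  ∃ g : Fin b.len → Fin n,
    (∀ i j : Fin b.len, i ∉ b.barred → j ∉ b.barred → i < j → g i < g j) ∧
    (∀ i j : Fin b.len, i ∉ b.barred → j ∉ b.barred →
      (b.perm i < b.perm j ↔ w (g i) < w (g j))) ∧
    ¬ ∃ f : Fin b.len → Fin n, IsOcc b.perm w f ∧ ∀ i ∉ b.barred, f i = g i

/-- The set of permutations avoiding the barred pattern `b`. -/
def AvB (b : BarredPattern) : Set Permutation :=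
  {w : Permutation | ¬ b.ContainedIn w.2}

/-- A vincular pattern: a permutation together with a set of bonds, encoded
as elements of `Fin (len+1)`: bond `0` bonds the first letter to the left
endpoint `*`, bond `len` bonds the last letter to the right endpoint `*`, and
a bond `β` with `0 < β < len` bonds the letters in (0-indexed) positions
`β - 1` and `β`. -/
structure VincularPattern where
  len : ℕ
  perm : Equiv.Perm (Fin len)
  bonds : Finset (Fin (len + 1))

/-- A vincular pattern is proper if it has at least one bond and its letters
are not all bonded together into a single block. -/
def VincularPattern.Proper (v : VincularPattern) : Prop :=
  v.bonds.Nonempty ∧ ∃ β : Fin (v.len + 1), 0 < (β : ℕ) ∧ (β : ℕ) < v.len ∧ β ∉ v.bonds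

/-- The underlying classical pattern of a vincular pattern. -/
def VincularPattern.toPermutation (v : VincularPattern) : Permutation := ⟨v.len, v.perm⟩

/-- `w` contains the vincular pattern `v`: there is an occurrence of the
underlying classical pattern of `v` in which any two bonded letters occupy
adjacent positions of `w`, a letter bonded to the left `*` occupies the first
position of `w`, and a letter bonded to the right `*` occupies the last
position of `w`. -/
def VincularPattern.ContainedIn (v : VincularPattern) {n : ℕ}
    (w : Equiv.Perm (Fin n)) : Prop :=
  ∃ f : Fin v.len → Fin n,
    IsOcc v.perm w f ∧
    (∀ β : Fin (v.len + 1), β ∈ v.bonds →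
      ∀ (h1 : 0 < (β : ℕ)) (h2 : (β : ℕ) < v.len),
        (f ⟨(β : ℕ), h2⟩ : ℕ) = (f ⟨(β : ℕ) - 1, by omega⟩ : ℕ) + 1) ∧
    ((0 : Fin (v.len + 1)) ∈ v.bonds → ∀ h : 0 < v.len, (f ⟨0, h⟩ : ℕ) = 0) ∧
    ((⟨v.len, by omega⟩ : Fin (v.len + 1)) ∈ v.bonds →
      ∀ h : 0 < v.len, (f ⟨v.len - 1, by omega⟩ : ℕ) = n - 1)

/-- The set of permutations avoiding the vincular pattern `v`. -/
def AvV (v : VincularPattern) : Set Permutation :=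
  {w : Permutation | ¬ v.ContainedIn w.2}

/-- `bond b`: the set of vincular patterns obtained from the barred pattern
`b` by deleting a nonempty subset `T` of the barred letters (flattening the
remaining letters to a pattern, using the order-preserving bijection `r` onto
the undeleted positions), placing a bond at each site where a letter was
deleted (a site is indexed by the number of undeleted positions to the left
of the deleted letter), and ignoring the bars on any remaining barred
letters. -/
def BarredPattern.bond (b : BarredPattern) : Set VincularPattern :=
  {v : VincularPattern | ∃ T : Finset (Fin b.len), T ⊆ b.barred ∧ T.Nonempty ∧
    ∃ r : Fin v.len → Fin b.len, StrictMono r ∧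
      (∀ i : Fin b.len, i ∉ T ↔ ∃ j : Fin v.len, r j = i) ∧
      (∀ i j : Fin v.len, v.perm i < v.perm j ↔ b.perm (r i) < b.perm (r j)) ∧
      ∀ β : Fin (v.len + 1), β ∈ v.bonds ↔
        ∃ t ∈ T, (β : ℕ) = (Finset.univ.filter fun i : Fin b.len => i ∉ T ∧ i < t).card}

/-- A proper barred pattern `b` is naturally coincidental (nat-co) if
`Av(b) = Av(bond b)`. -/
def BarredPattern.NatCo (b : BarredPattern) : Prop :=
  AvB b = ⋂ v ∈ b.bond, AvV v

/-- `q` is obtained from `p` by inserting a single new letter in position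
`pos`: deleting position `pos` from `q` leaves a sequence order-isomorphic
to `p`. -/
def IsInsertionAt {k : ℕ} (p : Equiv.Perm (Fin k)) (pos : Fin (k + 1))
    (q : Equiv.Perm (Fin (k + 1))) : Prop :=
  ∀ i j : Fin k, p i < p j ↔ q (pos.succAbove i) < q (pos.succAbove j)

/-- `bar v`: the set of barred patterns obtained from the vincular pattern
`v` by replacing a single bond (at site `β`) of `v` by an inserted barred
letter, in such a way that the resulting underlying classical pattern does
not contain `v`, ignoring all remaining bonds. -/
def VincularPattern.bar (v : VincularPattern) : Set BarredPattern :=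
  {b : BarredPattern | ∃ β ∈ v.bonds, ∃ hlen : b.len = v.len + 1,
    b.barred = {finCongr hlen.symm β} ∧
    IsInsertionAt v.perm β ((finCongr hlen).permCongr b.perm) ∧
    ¬ v.ContainedIn ((finCongr hlen).permCongr b.perm)}

/-- A vincular pattern is coincidental if its avoidance set equals the
avoidance set of some finite set of proper barred patterns. -/
def VincularPattern.Coincidental (v : VincularPattern) : Prop :=
  ∃ B : Set BarredPattern, B.Finite ∧ (∀ b ∈ B, b.Proper) ∧
    AvV v = ⋂ b ∈ B, AvB b

/-- `(i, j)` (0-indexed positions) delimits a maximal factor of consecutive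
barred letters of the barred pattern `b`, thereby determining a boycott
of `b`. -/
def BarredPattern.IsBoycottPair (b : BarredPattern) (i j : ℕ) : Prop :=
  i ≤ j ∧ j < b.len ∧
  (∀ p : Fin b.len, i ≤ (p : ℕ) → (p : ℕ) ≤ j → p ∈ b.barred) ∧
  (∀ p : Fin b.len, (p : ℕ) + 1 = i → p ∉ b.barred) ∧
  (∀ p : Fin b.len, (p : ℕ) = j + 1 → p ∉ b.barred)

/-- The boycott `X` determined by the maximal barred factor `(i, j)` of `b`:
the set of (1-indexed) values of the letters in positions `i-1, i, …, j, j+1`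
(those endpoints that exist). -/
def BarredPattern.boycottSet (b : BarredPattern) (i j : ℕ) : Finset ℕ :=
  (Finset.univ.filter fun p : Fin b.len => i ≤ (p : ℕ) + 1 ∧ (p : ℕ) ≤ j + 1).image
    fun p => (b.perm p : ℕ) + 1

/-- `B(X)`: the barred values of the boycott of `b` determined by `(i, j)`. -/
def BarredPattern.boycottB (b : BarredPattern) (i j : ℕ) : Finset ℕ :=
  (Finset.univ.filter fun p : Fin b.len => i ≤ (p : ℕ) ∧ (p : ℕ) ≤ j).image
    fun p => (b.perm p : ℕ) + 1

/-- `U(X)`: the unbarred values of the boycott of `b` determined by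
`(i, j)`. -/
def BarredPattern.boycottU (b : BarredPattern) (i j : ℕ) : Finset ℕ :=
  (Finset.univ.filter fun p : Fin b.len => (p : ℕ) + 1 = i ∨ (p : ℕ) = j + 1).image
    fun p => (b.perm p : ℕ) + 1

/-- The barred pattern `1‾423`: the permutation `1423` with the letter `4`
(in position `1`, 0-indexed) barred. -/
def barred1423 : BarredPattern where
  len := 4
  perm := ⟨![0, 3, 1, 2], ![0, 2, 3, 1], by decide, by decide⟩
  barred := {1}
  barred_nonempty := Finset.singleton_nonempty _

/-- The vincular pattern `[12]3`: the permutation `123` with a bond between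
the letters `1` and `2` (positions `0` and `1`, so bond site `1`). -/
def vincular123 : VincularPattern where
  len := 3
  perm := Equiv.refl (Fin 3)
  bonds := {1}

/-!
An occurrence `x < y < z` of `123` in `w` extends to no occurrence of `1423` with the `4` filled in
exactly when every letter strictly between positions `x` and `y` is smaller than `w z`.
Since `w x < w y`, some adjacent ascent `c ⋖ d` lies in `[x, y]`, and `w d < w z` (either `d = y`
or `d` lies strictly between `x` and `y`), so `(c, d, z)` is an occurrence of `[12]3`. Conversely, an
occurrence of `[12]3` leaves no room between its first two letters for the barred `4`.
-/

theorem exists_covBy_lt_of_lt {α β : Type*} [PartialOrder α] [SuccOrder α] [IsSuccArchimedean α]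
    [LinearOrder β] {f : α → β} {a b : α} (hab : a ≤ b) (h : f a < f b) :
    ∃ c d, a ≤ c ∧ c ⋖ d ∧ d ≤ b ∧ f c < f d := by
  by_contra! hcon
  have hanti : AntitoneOn f (Set.Icc a b) :=
    antitoneOn_of_succ_le Set.ordConnected_Icc fun c hc hac hsc =>
      hcon c _ hac.1 (Order.covBy_succ_of_not_isMax hc) hsc.2
  exact (hanti ⟨le_rfl, hab⟩ ⟨hab, le_rfl⟩ hab).not_gt h

theorem exists_increasing_triple_bounded_gap_iff_covBy {α β : Type*} [PartialOrder α]
    [SuccOrder α] [IsSuccArchimedean α] [LinearOrder β] (f : α → β) :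
    (∃ x y z, x < y ∧ y < z ∧ f x < f y ∧ f y < f z ∧ ∀ p, x < p → p < y → f p < f z) ↔
      ∃ x y z, x ⋖ y ∧ y < z ∧ f x < f y ∧ f y < f z := by
  constructor
  · rintro ⟨x, y, z, hxy, hyz, hfxy, hfyz, hgap⟩
    obtain ⟨c, d, hxc, hcd, hdy, hfcd⟩ := exists_covBy_lt_of_lt hxy.le hfxy
    have hfdz : f d < f z := by
      rcases hdy.lt_or_eq with hdy | rfl
      · exact hgap d (hxc.trans_lt hcd.lt) hdy
      · exact hfyz
    exact ⟨c, d, z, hcd, hdy.trans_lt hyz, hfcd, hfdz⟩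
  · rintro ⟨x, y, z, hxy, hyz, hfxy, hfyz⟩
    exact ⟨x, y, z, hxy.lt, hyz, hfxy, hfyz, fun p hxp hpy => (hxy.2 hxp hpy).elim⟩

theorem isOcc_iff_strictMono {k n : ℕ} (p : Equiv.Perm (Fin k)) (w : Equiv.Perm (Fin n))
    (f : Fin k → Fin n) : IsOcc p w f ↔ StrictMono f ∧ StrictMono (w ∘ f ∘ p.symm) := by
  refine and_congr_right fun _ => ⟨fun h a b hab => ?_, fun h i j => ?_⟩
  · simpa using (h (p.symm a) (p.symm b)).1 (by simpa using hab)
  · simpa using (h.lt_iff_lt (a := p i) (b := p j)).symm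

theorem isOcc_barred1423_iff {n : ℕ} (u : Equiv.Perm (Fin n)) (f : Fin 4 → Fin n) :
    IsOcc barred1423.perm u f ↔ (f 0 < f 1 ∧ f 1 < f 2 ∧ f 2 < f 3) ∧
      u (f 0) < u (f 2) ∧ u (f 2) < u (f 3) ∧ u (f 3) < u (f 1) := by
  refine (isOcc_iff_strictMono _ _ f).trans ?_
  simp [Fin.strictMono_iff_lt_succ, Fin.forall_fin_succ, barred1423]

theorem isOcc_vincular123_iff {n : ℕ} (u : Equiv.Perm (Fin n)) (f : Fin 3 → Fin n) :
    IsOcc vincular123.perm u f ↔ (f 0 < f 1 ∧ f 1 < f 2) ∧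
      u (f 0) < u (f 1) ∧ u (f 1) < u (f 2) := by
  refine (isOcc_iff_strictMono _ _ f).trans ?_
  simp [Fin.strictMono_iff_lt_succ, Fin.forall_fin_succ, vincular123]

theorem barred1423_containedIn_iff {n : ℕ} (u : Equiv.Perm (Fin n)) :
    barred1423.ContainedIn u ↔
      ∃ x y z, x < y ∧ y < z ∧ u x < u y ∧ u y < u z ∧ ∀ p, x < p → p < y → u p < u z := by
  dsimp only [BarredPattern.ContainedIn, barred1423]
  constructor
  · rintro ⟨g, hpos, hval, hnot⟩
    have h02 : g 0 < g 2 := hpos 0 2 (by decide) (by decide) (by decide)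
    have h23 : g 2 < g 3 := hpos 2 3 (by decide) (by decide) (by decide)
    have hu02 : u (g 0) < u (g 2) := (hval 0 2 (by decide) (by decide)).1 (by decide)
    have hu23 : u (g 2) < u (g 3) := (hval 2 3 (by decide) (by decide)).1 (by decide)
    refine ⟨g 0, g 2, g 3, h02, h23, hu02, hu23, fun p h0p hp2 => ?_⟩
    have hcompletion : ¬ u (g 3) < u p := by
      intro hup
      refine hnot ⟨Function.update g 1 p, (isOcc_barred1423_iff u _).2 (by simp [*]),
        fun i hi => Function.update_of_ne (by simpa using hi) _ _⟩
    exact (le_of_not_gt hcompletion).lt_of_ne (u.injective.ne (hp2.trans h23).ne)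
  · rintro ⟨x, y, z, hxy, hyz, huxy, huyz, hgap⟩
    -- the entry at the barred position `1` is never read
    refine ⟨![x, x, y, z], ?_, ?_, ?_⟩
    · intro i j hi hj hij
      fin_cases i <;> fin_cases j <;> simp_all [hxy.trans hyz]
    · intro i j hi hj
      fin_cases i <;> fin_cases j <;>
        simp_all [huxy.le, huyz.le, huxy.trans huyz, (huxy.trans huyz).le]
    rintro ⟨f, hocc, hf⟩
    obtain ⟨⟨h01, h12, -⟩, -, -, hu31⟩ := (isOcc_barred1423_iff u f).1 hocc
    have hf0 : f 0 = x := hf 0 (by decide)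
    have hf2 : f 2 = y := hf 2 (by decide)
    have hf3 : f 3 = z := hf 3 (by decide)
    exact (hgap (f 1) (hf0 ▸ h01) (hf2 ▸ h12)).not_gt (hf3 ▸ hu31)

theorem vincular123_containedIn_iff {n : ℕ} (u : Equiv.Perm (Fin n)) :
    vincular123.ContainedIn u ↔ ∃ x y z, x ⋖ y ∧ y < z ∧ u x < u y ∧ u y < u z := by
  dsimp only [VincularPattern.ContainedIn, vincular123]
  constructor
  · rintro ⟨f, hocc, hbond, -, -⟩
    obtain ⟨⟨-, h12⟩, hu01, hu12⟩ := (isOcc_vincular123_iff u f).1 hocc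
    have hcov : f 0 ⋖ f 1 := Fin.covBy_iff.2 (Nat.covBy_iff_add_one_eq.2
      (hbond 1 (by decide) (by decide) (by decide)).symm)
    exact ⟨f 0, f 1, f 2, hcov, h12, hu01, hu12⟩
  · rintro ⟨x, y, z, hxy, hyz, huxy, huyz⟩
    refine ⟨![x, y, z], (isOcc_vincular123_iff u _).2 ⟨⟨hxy.lt, hyz⟩, huxy, huyz⟩, ?_,
      fun h => absurd h (by decide), fun h => absurd h (by decide)⟩
    intro β hβ _ _
    obtain rfl : β = 1 := Finset.mem_singleton.1 hβ
    exact (Nat.covBy_iff_add_one_eq.1 (Fin.covBy_iff.1 hxy)).symm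

/-- A permutation avoids the barred pattern `1‾423` if and
only if it avoids the vincular pattern `[12]3`;
that is, `Av(1‾423) = Av([12]3)`. -/
theorem av_barred1423_eq_av_vincular123 :
    AvB barred1423 = AvV vincular123 := by
  ext ⟨n, u⟩
  simp only [AvB, AvV, barred1423_containedIn_iff, vincular123_containedIn_iff,
    exists_increasing_triple_bounded_gap_iff_covBy]
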